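/- arXiv:2101.00758 — 9 statements merged into one kernel-verified Lean document; each statement's English description precedes it below -/
import Mathlib

section
/- Let s, a, d, Tmax, ρ, δ, β, q, c, k1 be positive real numbers and let T0 = (Tmax/(2a))·((a − d) + √((a − d)² + 4as/Tmax)). If qβT0 < (c + k1·T0)(δ + ρ), then every complex root λ of the polynomial (λ − (a − d − 2aT0/Tmax)) · (λ² + (δ + ρ + c + k1·T0)·λ + (c + k1·T0)(δ+ρ) − qβT0) satisfies Re λ < 0. -/
/-!
The characteristic polynomial factors into a linear and a quadratic factor. The linear root
`a - d - 2 a T0 / Tmax` equals `-√((a - d)² + 4 a s / Tmax)`, which is negative. The quadratic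
`λ² + B λ + C` has `B > 0`, and `C > 0` is exactly the condition `R0 < 1`; comparing real and
imaginary parts shows that its roots have negative real part.
-/

theorem Complex.re_neg_of_sq_add_mul_add_eq_zero {B C : ℝ} (hB : 0 < B) (hC : 0 < C) {z : ℂ}
    (h : z ^ 2 + B * z + C = 0) : z.re < 0 := by
  have hre : z.re ^ 2 - z.im ^ 2 + B * z.re + C = 0 := by
    simpa [sq] using congrArg Complex.re h
  have him : z.im * (2 * z.re + B) = 0 := by
    have := congrArg Complex.im h
    simp only [sq, add_im, mul_im, ofReal_re, ofReal_im, zero_im] at this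
    linarith
  rcases mul_eq_zero.mp him with hy | hx
  · rw [hy] at hre
    by_contra! hx
    nlinarith
  · linarith

theorem Real.add_sqrt_sq_add_pos (x : ℝ) {e : ℝ} (he : 0 < e) : 0 < x + √(x ^ 2 + e) := by
  have : |x| < √(x ^ 2 + e) := by
    rw [← Real.sqrt_sq_eq_abs]
    exact Real.sqrt_lt_sqrt (sq_nonneg x) (by linarith)
  linarith [neg_abs_le x]

theorem stmt_1_general (s a d Tmax ρ δ β q c k1 : ℝ)
    (hs : 0 < s) (ha : 0 < a) (hTmax : 0 < Tmax) (hρ : 0 < ρ)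
    (hδ : 0 < δ) (hc : 0 < c) (hk1 : 0 < k1)
    (T0 : ℝ)
    (hT0 : T0 = (Tmax/(2*a)) * ((a - d) + Real.sqrt ((a - d)^2 + 4*a*s/Tmax)))
    (hR0 : q*β*T0 < (c + k1*T0)*(δ + ρ)) :
    ∀ lam : ℂ,
      (lam - ((a - d - 2*a*T0/Tmax : ℝ) : ℂ)) *
        (lam^2 + ((δ + ρ + c + k1*T0 : ℝ) : ℂ) * lam +
          ((c + k1*T0 : ℝ) : ℂ) * ((δ + ρ : ℝ) : ℂ) - ((q*β*T0 : ℝ) : ℂ)) = 0 →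
      lam.re < 0 := by
  have hdisc : 0 < 4*a*s/Tmax := by positivity
  have hsum := Real.add_sqrt_sq_add_pos (a - d) hdisc
  have hT0pos : 0 < T0 := hT0 ▸ by positivity
  intro lam h
  rcases mul_eq_zero.mp h with hlin | hquad
  · have hroot : a - d - 2*a*T0/Tmax = -√((a - d)^2 + 4*a*s/Tmax) := by
      rw [hT0]; field_simp; ring
    rw [sub_eq_zero.mp hlin, Complex.ofReal_re, hroot, neg_lt_zero]
    exact Real.sqrt_pos.mpr (by positivity)
  · refine Complex.re_neg_of_sq_add_mul_add_eq_zero (B := δ + ρ + c + k1*T0)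
      (C := (c + k1*T0)*(δ + ρ) - q*β*T0) (by positivity) (by linarith) ?_
    rw [← hquad]
    push_cast
    ring

theorem stmt_1 (s a d Tmax ρ δ β q c k1 : ℝ)
    (hs : 0 < s) (ha : 0 < a) (hd : 0 < d) (hTmax : 0 < Tmax) (hρ : 0 < ρ)
    (hδ : 0 < δ) (hβ : 0 < β) (hq : 0 < q) (hc : 0 < c) (hk1 : 0 < k1)
    (T0 : ℝ)
    (hT0 : T0 = (Tmax/(2*a)) * ((a - d) + Real.sqrt ((a - d)^2 + 4*a*s/Tmax)))
    (hR0 : q*β*T0 < (c + k1*T0)*(δ + ρ)) :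
    ∀ lam : ℂ,
      (lam - ((a - d - 2*a*T0/Tmax : ℝ) : ℂ)) *
        (lam^2 + ((δ + ρ + c + k1*T0 : ℝ) : ℂ) * lam +
          ((c + k1*T0 : ℝ) : ℂ) * ((δ + ρ : ℝ) : ℂ) - ((q*β*T0 : ℝ) : ℂ)) = 0 →
      lam.re < 0 :=
  stmt_1_general s a d Tmax ρ δ β q c k1 hs ha hTmax hρ hδ hc hk1 T0 hT0 hR0
end

section
/- Let s, d, a, Tmax, β, α, ρ, δ, q, c, k1 be positive real numbers. Let T, I, V : ℝ → ℝ be differentiable functions that are positive on [0, ∞) and satisfy, for all t ≥ 0: T'(t) = s − d·T(t) + a·T(t)·(1 − T(t)/Tmax) − β·T(t)·V(t)/(1 + α·V(t)) + ρ·I(t), I'(t) = β·T(t)·V(t)/(1 + α·V(t)) − (δ+ρ)·I(t), and V'(t) = q·I(t) − c·V(t) − k1·V(t)·T(t). Then there exists a real number M > 0 such that T(t) ≤ M, I(t) ≤ M and V(t) ≤ M for all t ≥ 0; in particular every positive solution of the system is bounded. -/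
/-! The total cell count `T + I` satisfies `(T + I)' ≤ s + a Tmax / 4 - min d δ (T + I)`: the
infection and cure terms cancel, and the logistic term is at most `a Tmax / 4`. A linear
differential inequality `f' ≤ K - λ f` keeps `f` below `max (f 0) (K / λ)`, which bounds `T` and `I`.
Then `V' ≤ q sup I - c V`, as the absorption term is nonpositive, and the same inequality bounds `V`. -/

open Real Set

theorem le_max_of_deriv_le_sub_mul {f : ℝ → ℝ} {K l : ℝ} (hl : 0 < l)
    (hf : Differentiable ℝ f) (hf' : ∀ t ≥ (0:ℝ), deriv f t ≤ K - l * f t) :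
    ∀ t ≥ (0:ℝ), f t ≤ max (f 0) (K / l) := by
  set C := K / l
  have hlC : l * C = K := mul_div_cancel₀ K hl.ne'
  let g : ℝ → ℝ := fun t => (f t - C) * exp (l * t)
  have hg : ∀ t, HasDerivAt g ((deriv f t + l * f t - K) * exp (l * t)) t := by
    intro t
    have hexp : HasDerivAt (fun t => exp (l * t)) (exp (l * t) * l) t :=
      ((hasDerivAt_id t).const_mul l).exp.congr_deriv (by simp)
    exact (((hf t).hasDerivAt.sub_const C).mul hexp).congr_deriv (by rw [← hlC]; ring)
  have hg_anti : AntitoneOn g (Ici 0) := by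
    refine antitoneOn_of_deriv_nonpos (convex_Ici 0)
      (fun t _ => (hg t).continuousAt.continuousWithinAt)
      (fun t _ => (hg t).differentiableAt.differentiableWithinAt) fun t ht => ?_
    rw [interior_Ici] at ht
    rw [(hg t).deriv]
    exact mul_nonpos_of_nonpos_of_nonneg (by linarith [hf' t ht.le]) (exp_pos _).le
  intro t ht
  have hgt : (f t - C) * exp (l * t) ≤ f 0 - C := by
    simpa [g] using hg_anti self_mem_Ici ht ht
  rcases le_or_gt (f t) C with hC | hC
  · exact le_max_of_le_right hC
  · have : f t - C ≤ (f t - C) * exp (l * t) :=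
      le_mul_of_one_le_right (sub_pos.2 hC).le (one_le_exp (mul_nonneg hl.le ht))
    exact le_max_of_le_left (by linarith)

theorem mul_mul_one_sub_div_le {a x N : ℝ} (ha : 0 ≤ a) (hN : 0 < N) :
    a * x * (1 - x / N) ≤ a * N / 4 := by
  have key : x * (1 - x / N) ≤ N / 4 := by
    have : x * (1 - x / N) = N / 4 - (x - N / 2) ^ 2 / N := by field_simp; ring
    rw [this]
    linarith [div_nonneg (sq_nonneg (x - N / 2)) hN.le]
  simpa [mul_assoc, mul_div_assoc] using mul_le_mul_of_nonneg_left key ha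

theorem stmt_3_general (s d a Tmax β α ρ δ q c k1 : ℝ)
    (hd : 0 < d) (ha : 0 < a) (hTmax : 0 < Tmax)
    (hδ : 0 < δ) (hq : 0 < q) (hc : 0 < c) (hk1 : 0 < k1)
    (T I V : ℝ → ℝ)
    (hTdiff : Differentiable ℝ T) (hIdiff : Differentiable ℝ I)
    (hVdiff : Differentiable ℝ V)
    (hTpos : ∀ t ≥ (0:ℝ), 0 < T t) (hIpos : ∀ t ≥ (0:ℝ), 0 < I t)
    (hVpos : ∀ t ≥ (0:ℝ), 0 < V t)
    (hT : ∀ t ≥ (0:ℝ), deriv T t =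
      s - d * T t + a * T t * (1 - T t / Tmax) - β * T t * V t / (1 + α * V t) + ρ * I t)
    (hI : ∀ t ≥ (0:ℝ), deriv I t =
      β * T t * V t / (1 + α * V t) - (δ + ρ) * I t)
    (hV : ∀ t ≥ (0:ℝ), deriv V t = q * I t - c * V t - k1 * V t * T t) :
    ∃ M : ℝ, 0 < M ∧ ∀ t ≥ (0:ℝ), T t ≤ M ∧ I t ≤ M ∧ V t ≤ M := by
  have hTI' : ∀ t ≥ (0:ℝ), deriv (T + I) t ≤ (s + a * Tmax / 4) - min d δ * (T + I) t := by
    intro t ht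
    rw [deriv_add (hTdiff t) (hIdiff t), hT t ht, hI t ht, Pi.add_apply]
    have := mul_mul_one_sub_div_le (x := T t) ha.le hTmax
    have := mul_le_mul_of_nonneg_right (min_le_left d δ) (hTpos t ht).le
    have := mul_le_mul_of_nonneg_right (min_le_right d δ) (hIpos t ht).le
    linarith
  set M₁ := max ((T + I) 0) ((s + a * Tmax / 4) / min d δ)
  have hTI := le_max_of_deriv_le_sub_mul (lt_min hd hδ) (hTdiff.add hIdiff) hTI'
  have hV' : ∀ t ≥ (0:ℝ), deriv V t ≤ q * M₁ - c * V t := by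
    intro t ht
    have := hTI t ht
    have := mul_pos (mul_pos hk1 (hVpos t ht)) (hTpos t ht)
    rw [Pi.add_apply] at *
    nlinarith [hV t ht, hTpos t ht]
  have hVle := le_max_of_deriv_le_sub_mul hc hVdiff hV'
  have hM₁ : 0 < M₁ := lt_max_of_lt_left (add_pos (hTpos 0 le_rfl) (hIpos 0 le_rfl))
  refine ⟨max M₁ (max (V 0) (q * M₁ / c)), lt_max_of_lt_left hM₁, fun t ht => ?_⟩
  have := hTI t ht
  rw [Pi.add_apply] at this
  refine ⟨?_, ?_, le_max_of_le_right (hVle t ht)⟩ <;>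
    linarith [le_max_left M₁ (max (V 0) (q * M₁ / c)), hTpos t ht, hIpos t ht]

theorem stmt_3 (s d a Tmax β α ρ δ q c k1 : ℝ)
    (hs : 0 < s) (hd : 0 < d) (ha : 0 < a) (hTmax : 0 < Tmax) (hβ : 0 < β)
    (hα : 0 < α) (hρ : 0 < ρ) (hδ : 0 < δ) (hq : 0 < q) (hc : 0 < c) (hk1 : 0 < k1)
    (T I V : ℝ → ℝ)
    (hTdiff : Differentiable ℝ T) (hIdiff : Differentiable ℝ I)
    (hVdiff : Differentiable ℝ V)
    (hTpos : ∀ t ≥ (0:ℝ), 0 < T t) (hIpos : ∀ t ≥ (0:ℝ), 0 < I t)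
    (hVpos : ∀ t ≥ (0:ℝ), 0 < V t)
    (hT : ∀ t ≥ (0:ℝ), deriv T t =
      s - d * T t + a * T t * (1 - T t / Tmax) - β * T t * V t / (1 + α * V t) + ρ * I t)
    (hI : ∀ t ≥ (0:ℝ), deriv I t =
      β * T t * V t / (1 + α * V t) - (δ + ρ) * I t)
    (hV : ∀ t ≥ (0:ℝ), deriv V t = q * I t - c * V t - k1 * V t * T t) :
    ∃ M : ℝ, 0 < M ∧ ∀ t ≥ (0:ℝ), T t ≤ M ∧ I t ≤ M ∧ V t ≤ M :=
  stmt_3_general s d a Tmax β α ρ δ q c k1 hd ha hTmax hδ hq hc hk1 T I V hTdiff hIdiff hVdiff hTpos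
    hIpos hVpos hT hI hV
end

section
/- Let s, d, a, Tmax, β, α, ρ, δ, q, c, k1 be positive real numbers with qβ > (δ+ρ)·k1, let T0 = (Tmax/(2a))·((a − d) + √((a − d)² + 4as/Tmax)), and assume (qβ − (δ+ρ)·k1)·T0 > c·(δ+ρ). Then there exist positive real numbers T̄, Ī, V̄ such that s − d·T̄ + a·T̄·(1 − T̄/Tmax) − β·T̄·V̄/(1 + α·V̄) + ρ·Ī = 0, β·T̄·V̄/(1 + α·V̄) − (δ+ρ)·Ī = 0, and q·Ī − c·V̄ − k1·V̄·T̄ = 0. -/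
/-!
Adding the first two steady-state equations eliminates the infection term, leaving
`g(T) = δ I` for the T-cell growth `g(T) = s - dT + aT(1 - T/Tmax)`. The second and third
equations determine `V = qI/(c + k1 T)` and force `1 + αV = qβT/((δ+ρ)(c + k1 T))`, so on the
infected branch `I` is the affine function of `T` vanishing at the threshold
`T* = c(δ+ρ)/(qβ - (δ+ρ)k1)`. The condition `R₀ > 1` says `T* < T0`. Since `g` is positive on
`[0, T0)` and vanishes at `T0`, the continuous function `g - δ I` is positive at `T*` and negative
at `T0`, so it has a root strictly between them: that root is `T̄`.
-/

namespace HIVSteadyState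

noncomputable def growth (s d a Tmax T : ℝ) : ℝ := s - d*T + a*T*(1 - T/Tmax)

noncomputable def infected (β α ρ δ q c k1 T : ℝ) : ℝ :=
  ((q*β - (δ+ρ)*k1)*T - c*(δ+ρ)) / (q*α*(δ+ρ))

noncomputable def virions (β α ρ δ q c k1 T : ℝ) : ℝ :=
  q * infected β α ρ δ q c k1 T / (c + k1*T)

variable {s d a Tmax β α ρ δ q c k1 T T0 : ℝ}

theorem growth_largerRoot_eq_zero (ha : 0 < a) (hTmax : 0 < Tmax) (hs : 0 ≤ s) :
    growth s d a Tmax ((Tmax/(2*a)) * ((a - d) + √((a - d)^2 + 4*a*s/Tmax))) = 0 := by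
  have hr := Real.sq_sqrt (show 0 ≤ (a - d)^2 + 4*a*s/Tmax by positivity)
  set r := √((a - d)^2 + 4*a*s/Tmax)
  have h : growth s d a Tmax ((Tmax/(2*a)) * ((a - d) + r))
      = s + Tmax*((a - d)^2 - r^2)/(4*a) := by
    unfold growth
    field_simp
    ring
  rw [h, hr]
  field_simp
  ring

theorem growth_mul_eq_of_root (hT0 : growth s d a Tmax T0 = 0) :
    growth s d a Tmax T * T0 = (T0 - T) * (s + a*T*T0/Tmax) := by
  unfold growth at *
  linear_combination T * hT0

theorem growth_pos_of_lt_root (hs : 0 < s) (ha : 0 ≤ a) (hTmax : 0 < Tmax)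
    (hT0 : growth s d a Tmax T0 = 0) (hT : 0 ≤ T) (hTT0 : T < T0) :
    0 < growth s d a Tmax T := by
  have hT0_nonneg : 0 ≤ T0 := hT.trans hTT0.le
  refine pos_of_mul_pos_left ?_ hT0_nonneg
  rw [growth_mul_eq_of_root hT0]
  exact mul_pos (sub_pos.2 hTT0) (by positivity)

theorem infected_threshold (h : q*β - (δ+ρ)*k1 ≠ 0) :
    infected β α ρ δ q c k1 (c*(δ+ρ)/(q*β - (δ+ρ)*k1)) = 0 := by
  rw [infected, mul_div_cancel₀ _ h, sub_self, zero_div]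

theorem infected_pos (hq : 0 < q) (hα : 0 < α) (hδρ : 0 < δ + ρ)
    (hT : c*(δ+ρ) < (q*β - (δ+ρ)*k1)*T) : 0 < infected β α ρ δ q c k1 T :=
  div_pos (sub_pos.2 hT) (by positivity)

theorem one_add_mul_virions (hq : q ≠ 0) (hα : α ≠ 0) (hδρ : δ + ρ ≠ 0) (hcT : c + k1*T ≠ 0) :
    1 + α * virions β α ρ δ q c k1 T = q*β*T / ((δ+ρ)*(c + k1*T)) := by
  unfold virions infected
  field_simp
  ring

theorem infection_rate_virions (hβ : β ≠ 0) (hq : q ≠ 0) (hα : α ≠ 0) (hδρ : δ + ρ ≠ 0)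
    (hT : T ≠ 0) (hcT : c + k1*T ≠ 0) :
    β*T*virions β α ρ δ q c k1 T / (1 + α*virions β α ρ δ q c k1 T)
      = (δ+ρ) * infected β α ρ δ q c k1 T := by
  rw [one_add_mul_virions hq hα hδρ hcT]
  unfold virions
  rw [mul_comm k1] at hcT ⊢
  field_simp

theorem virion_balance (hcT : c + k1*T ≠ 0) :
    q * infected β α ρ δ q c k1 T - c * virions β α ρ δ q c k1 T
      - k1 * virions β α ρ δ q c k1 T * T = 0 := by
  unfold virions
  field_simp
  ring

theorem exists_balance (hs : 0 < s) (ha : 0 ≤ a) (hTmax : 0 < Tmax) (hδ : 0 < δ) {T₁ : ℝ}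
    (hT0 : growth s d a Tmax T0 = 0) (hT₁ : 0 ≤ T₁) (hT₁T0 : T₁ < T0)
    (hI₁ : infected β α ρ δ q c k1 T₁ = 0) (hI0 : 0 < infected β α ρ δ q c k1 T0) :
    ∃ T ∈ Set.Ioo T₁ T0, growth s d a Tmax T = δ * infected β α ρ δ q c k1 T := by
  have hcont : Continuous fun T ↦ growth s d a Tmax T - δ * infected β α ρ δ q c k1 T := by
    unfold growth infected
    fun_prop
  have hpos : 0 < growth s d a Tmax T₁ - δ * infected β α ρ δ q c k1 T₁ := by
    rw [hI₁, mul_zero, sub_zero]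
    exact growth_pos_of_lt_root hs ha hTmax hT0 hT₁ hT₁T0
  have hneg : growth s d a Tmax T0 - δ * infected β α ρ δ q c k1 T0 < 0 := by
    rw [hT0, zero_sub, neg_neg_iff_pos]
    exact mul_pos hδ hI0
  obtain ⟨T, hT, hbal⟩ := intermediate_value_Ioo' hT₁T0.le hcont.continuousOn ⟨hneg, hpos⟩
  exact ⟨T, hT, sub_eq_zero.1 hbal⟩

end HIVSteadyState

open HIVSteadyState

theorem stmt_7_general (s d a Tmax β α ρ δ q c k1 : ℝ)
    (hs : 0 < s) (ha : 0 < a) (hTmax : 0 < Tmax) (hβ : 0 < β)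
    (hα : 0 < α) (hρ : 0 < ρ) (hδ : 0 < δ) (hq : 0 < q) (hc : 0 < c) (hk1 : 0 < k1)
    (hqβ : q*β > (δ+ρ)*k1)
    (T0 : ℝ)
    (hT0 : T0 = (Tmax/(2*a)) * ((a - d) + Real.sqrt ((a - d)^2 + 4*a*s/Tmax)))
    (hR0 : (q*β - (δ+ρ)*k1) * T0 > c*(δ+ρ)) :
    ∃ Tbar Ibar Vbar : ℝ, 0 < Tbar ∧ 0 < Ibar ∧ 0 < Vbar ∧
      s - d*Tbar + a*Tbar*(1 - Tbar/Tmax) - β*Tbar*Vbar/(1 + α*Vbar) + ρ*Ibar = 0 ∧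
      β*Tbar*Vbar/(1 + α*Vbar) - (δ+ρ)*Ibar = 0 ∧
      q*Ibar - c*Vbar - k1*Vbar*Tbar = 0 := by
  have hδρ : 0 < δ + ρ := add_pos hδ hρ
  have hM : 0 < q*β - (δ+ρ)*k1 := sub_pos.2 hqβ
  set Tthr := c*(δ+ρ)/(q*β - (δ+ρ)*k1)
  have hTthr : 0 < Tthr := by positivity
  have hTthrT0 : Tthr < T0 := (div_lt_iff₀' hM).2 hR0
  have hroot : growth s d a Tmax T0 = 0 := hT0 ▸ growth_largerRoot_eq_zero ha hTmax hs.le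
  obtain ⟨T, ⟨hTthrT, -⟩, hbal⟩ := exists_balance hs ha.le hTmax hδ hroot hTthr.le hTthrT0
    (infected_threshold hM.ne') (infected_pos hq hα hδρ hR0)
  have hT : 0 < T := hTthr.trans hTthrT
  have hI : 0 < infected β α ρ δ q c k1 T := infected_pos hq hα hδρ ((div_lt_iff₀' hM).1 hTthrT)
  have hcT : 0 < c + k1*T := by positivity
  have hrate := infection_rate_virions hβ.ne' hq.ne' hα.ne' hδρ.ne' hT.ne' hcT.ne'
  refine ⟨T, infected β α ρ δ q c k1 T, virions β α ρ δ q c k1 T, hT, hI,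
    div_pos (mul_pos hq hI) hcT, ?_, ?_, virion_balance hcT.ne'⟩
  · rw [hrate]
    unfold growth at hbal
    linear_combination hbal
  · rw [hrate, sub_self]

theorem stmt_7 (s d a Tmax β α ρ δ q c k1 : ℝ)
    (hs : 0 < s) (hd : 0 < d) (ha : 0 < a) (hTmax : 0 < Tmax) (hβ : 0 < β)
    (hα : 0 < α) (hρ : 0 < ρ) (hδ : 0 < δ) (hq : 0 < q) (hc : 0 < c) (hk1 : 0 < k1)
    (hqβ : q*β > (δ+ρ)*k1)
    (T0 : ℝ)
    (hT0 : T0 = (Tmax/(2*a)) * ((a - d) + Real.sqrt ((a - d)^2 + 4*a*s/Tmax)))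
    (hR0 : (q*β - (δ+ρ)*k1) * T0 > c*(δ+ρ)) :
    ∃ Tbar Ibar Vbar : ℝ, 0 < Tbar ∧ 0 < Ibar ∧ 0 < Vbar ∧
      s - d*Tbar + a*Tbar*(1 - Tbar/Tmax) - β*Tbar*Vbar/(1 + α*Vbar) + ρ*Ibar = 0 ∧
      β*Tbar*Vbar/(1 + α*Vbar) - (δ+ρ)*Ibar = 0 ∧
      q*Ibar - c*Vbar - k1*Vbar*Tbar = 0 :=
  stmt_7_general s d a Tmax β α ρ δ q c k1 hs ha hTmax hβ hα hρ hδ hq hc hk1 hqβ T0 hT0 hR0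
end

section
/- Let β, ρ, δ, q, c, k1, T be positive real numbers satisfying q·β·T ≤ (δ+ρ)·(c + k1·T). Then for all real numbers z1, z2: 2·((δ+ρ)/(βT)²)·z1·(βT·z2 − (δ+ρ)·z1) + (2/(c + k1·T))·z2·(q·z1 − (c + k1·T)·z2) ≤ 0, with equality only if ((δ+ρ)/(βT))·z1 = z2 or z1 = z2 = 0. -/
/-!
Write `A = δ + ρ`, `B = βT`, `C = c + k₁T`, `u = A z₁`, `v = B z₂` and `r = qB/(AC)`,
so that `R₀ ≤ 1` reads `0 ≤ r ≤ 1`. The orbital derivative is `(2/B²)((1 + r)uv - u² - v²)`,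
and `2(u² + v² - (1 + r)uv) = (1 + r)(u - v)² + (1 - r)(u² + v²)` is a sum of two
nonnegative terms, the first of which vanishes only on the line `u = v`.
-/

theorem two_mul_sq_add_sq_sub_mul_eq (r u v : ℝ) :
    2 * (u ^ 2 + v ^ 2 - (1 + r) * u * v)
      = (1 + r) * (u - v) ^ 2 + (1 - r) * (u ^ 2 + v ^ 2) := by
  ring

theorem one_add_mul_mul_le_sq_add_sq {r : ℝ} (hr₀ : -1 ≤ r) (hr₁ : r ≤ 1) (u v : ℝ) :
    (1 + r) * u * v ≤ u ^ 2 + v ^ 2 := by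
  have := two_mul_sq_add_sq_sub_mul_eq r u v
  linarith [mul_nonneg (neg_le_iff_add_nonneg'.mp hr₀) (sq_nonneg (u - v)),
    mul_nonneg (sub_nonneg.mpr hr₁) (add_nonneg (sq_nonneg u) (sq_nonneg v))]

theorem eq_of_one_add_mul_mul_eq_sq_add_sq {r u v : ℝ} (hr₀ : -1 < r) (hr₁ : r ≤ 1)
    (h : (1 + r) * u * v = u ^ 2 + v ^ 2) : u = v := by
  have hsplit := two_mul_sq_add_sq_sub_mul_eq r u v
  have hrest : 0 ≤ (1 - r) * (u ^ 2 + v ^ 2) := by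
    have := sub_nonneg.mpr hr₁
    positivity
  have hdiag : (1 + r) * (u - v) ^ 2 = 0 := by
    have : 0 ≤ (1 + r) * (u - v) ^ 2 := by
      have : 0 < 1 + r := by linarith
      positivity
    linarith
  have hsq : (u - v) ^ 2 = 0 := (mul_eq_zero.mp hdiag).resolve_left (by linarith)
  exact sub_eq_zero.mp (pow_eq_zero_iff two_ne_zero |>.mp hsq)

theorem lyapunov_orbitalDeriv_eq {A B C : ℝ} (hA : A ≠ 0) (hB : B ≠ 0) (hC : C ≠ 0)
    (q z₁ z₂ : ℝ) :
    2 * (A / B ^ 2) * z₁ * (B * z₂ - A * z₁) + (2 / C) * z₂ * (q * z₁ - C * z₂)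
      = (2 / B ^ 2) *
          ((1 + q * B / (A * C)) * (A * z₁) * (B * z₂) - (A * z₁) ^ 2 - (B * z₂) ^ 2) := by
  field_simp
  ring

theorem stmt_9 (β ρ δ q c k1 T : ℝ)
    (hβ : 0 < β) (hρ : 0 < ρ) (hδ : 0 < δ) (hq : 0 < q) (hc : 0 < c)
    (hk1 : 0 < k1) (hT : 0 < T)
    (hR0 : q*β*T ≤ (δ+ρ)*(c + k1*T)) :
    ∀ z1 z2 : ℝ,
      2*((δ+ρ)/(β*T)^2)*z1*(β*T*z2 - (δ+ρ)*z1)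
        + (2/(c + k1*T))*z2*(q*z1 - (c + k1*T)*z2) ≤ 0 ∧
      (2*((δ+ρ)/(β*T)^2)*z1*(β*T*z2 - (δ+ρ)*z1)
        + (2/(c + k1*T))*z2*(q*z1 - (c + k1*T)*z2) = 0 →
        ((δ+ρ)/(β*T))*z1 = z2 ∨ (z1 = 0 ∧ z2 = 0)) := by
  intro z1 z2
  have hA : 0 < δ + ρ := by positivity
  have hB : 0 < β * T := by positivity
  have hC : 0 < c + k1 * T := by positivity
  set r := q * (β * T) / ((δ + ρ) * (c + k1 * T))
  have hr₀ : 0 ≤ r := by positivity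
  have hr₁ : r ≤ 1 := div_le_one_of_le₀ (by linarith) (by positivity)
  rw [lyapunov_orbitalDeriv_eq hA.ne' hB.ne' hC.ne']
  have hscale : 0 < 2 / (β * T) ^ 2 := by positivity
  refine ⟨mul_nonpos_of_nonneg_of_nonpos hscale.le ?_, fun h ↦ Or.inl ?_⟩
  · linarith [one_add_mul_mul_le_sq_add_sq (by linarith) hr₁ ((δ + ρ) * z1) (β * T * z2)]
  · have hquad := (mul_eq_zero.mp h).resolve_left hscale.ne'
    have huv : (δ + ρ) * z1 = β * T * z2 :=
      eq_of_one_add_mul_mul_eq_sq_add_sq (r := r) (by linarith) hr₁ (by linarith)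
    rw [div_mul_eq_mul_div, div_eq_iff hB.ne', huv, mul_comm]
end

section
/- Let s, d, a, Tmax, β, α, ρ, δ, q, c, k1 be positive real numbers with qβ > (δ+ρ)·k1, let T0 = (Tmax/(2a))·((a − d) + √((a − d)² + 4as/Tmax)), and assume (qβ − (δ+ρ)·k1)·T0 > c·(δ+ρ). Let T, I, V : ℝ → ℝ be differentiable functions, positive on [0, ∞), satisfying for all t ≥ 0: T'(t) = s − d·T(t) + a·T(t)·(1 − T(t)/Tmax) − β·T(t)·V(t)/(1 + α·V(t)) + ρ·I(t), I'(t) = β·T(t)·V(t)/(1 + α·V(t)) − (δ+ρ)·I(t), V'(t) = q·I(t) − c·V(t) − k1·V(t)·T(t). Then there exists ε > 0 such that liminf_{t→∞} T(t) ≥ ε, liminf_{t→∞} I(t) ≥ ε and liminf_{t→∞} V(t) ≥ ε; that is, the system is permanent. -/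
/-!
Solutions are bounded, since `T + I` and `V` obey linear differential inequalities, and `T` is
persistent because `T' ≥ s/4` whenever `T` is small. The heart of the proof is the persistence of
`L = I + η V`, where `η` lies strictly between `(δ + ρ) / q` and `β T0 / (c + k1 T0)`; such `η`
exists exactly when `R0 > 1`. While `L` is small so is `V`, hence `T` climbs above a level
`T₁ < T0` within a fixed time `D`, and from then on `L' ≥ σ L`. So `L` reaches a level `ℓ`,
and since `L' ≥ -Γ L` always, an excursion below `ℓ` cannot take it under `ℓ e^{-Γ D}` before
the growth sets in. Lower bounds for `V` and then for `I` follow from `V' ≥ q L - O(V)` and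
`I' ≥ β T V / (1 + α V) - (δ + ρ) I`.
-/

open Set Filter Real Topology

section Comparison

variable {f : ℝ → ℝ}

theorem le_of_deriv_neg_at_level (hf : Differentiable ℝ f) {a b c : ℝ} (ha : f a ≤ c)
    (hd : ∀ t ∈ Ico a b, f t = c → deriv f t < 0) : ∀ t ∈ Icc a b, f t ≤ c :=
  image_le_of_deriv_right_lt_deriv_boundary hf.continuous.continuousOn
    (fun t _ => (hf t).hasDerivAt.hasDerivWithinAt) ha (fun _ => hasDerivAt_const _ c) hd

theorem ge_of_deriv_pos_at_level (hf : Differentiable ℝ f) {a b c : ℝ} (ha : c ≤ f a)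
    (hd : ∀ t ∈ Ico a b, f t = c → 0 < deriv f t) : ∀ t ∈ Icc a b, c ≤ f t :=
  image_le_of_deriv_right_lt_deriv_boundary continuousOn_const
    (fun _ _ => hasDerivWithinAt_const _ _ c) ha (fun t => (hf t).hasDerivAt)
    (fun t ht h => hd t ht h.symm)

theorem ge_of_deriv_ge_of_le (hf : Differentiable ℝ f) {a b c r τ : ℝ} (hr : 0 < r)
    (hτ : 0 ≤ τ) (hc : c ≤ f a + r * τ) (hd : ∀ t ∈ Icc a b, f t ≤ c → r ≤ deriv f t) :
    ∀ t ∈ Icc (a + τ) b, c ≤ f t := by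
  intro t ht
  obtain ⟨u, hu, hcu⟩ : ∃ u ∈ Icc a (a + τ), c ≤ f u := by
    by_contra! hlt
    have hgrowth := (convex_Icc a (a + τ)).mul_sub_le_image_sub_of_le_deriv
      hf.continuous.continuousOn hf.differentiableOn
      (fun x hx => hd x (Icc_subset_Icc_right (ht.1.trans ht.2) (interior_subset hx))
        (hlt x (interior_subset hx)).le)
      a (left_mem_Icc.2 (by linarith)) (a + τ) (right_mem_Icc.2 (by linarith)) (by linarith)
    have := hlt (a + τ) (right_mem_Icc.2 (by linarith))
    rw [add_sub_cancel_left] at hgrowth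
    linarith
  exact ge_of_deriv_pos_at_level hf hcu
    (fun s hs hfs => hr.trans_le (hd s ⟨hu.1.trans hs.1, hs.2.le⟩ hfs.le))
    t ⟨hu.2.trans ht.1, ht.2⟩

theorem eventually_ge_of_deriv_ge_of_le (hf : Differentiable ℝ f) {m c r : ℝ} (hr : 0 < r)
    (hm : ∀ᶠ t in atTop, m ≤ f t) (hd : ∀ᶠ t in atTop, f t ≤ c → r ≤ deriv f t) :
    ∀ᶠ t in atTop, c ≤ f t := by
  obtain ⟨w, hw⟩ := (hm.and hd).exists_forall_of_atTop
  have hτ : c - m ≤ r * max 0 ((c - m) / r) :=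
    (mul_div_cancel₀ _ hr.ne').ge.trans (mul_le_mul_of_nonneg_left (le_max_right _ _) hr.le)
  filter_upwards [eventually_ge_atTop (w + max 0 ((c - m) / r))] with t ht
  exact ge_of_deriv_ge_of_le hf hr (le_max_left _ _) (by linarith [(hw w le_rfl).1])
    (fun s hs => (hw s hs.1).2) t ⟨ht, le_rfl⟩

theorem mul_exp_le_of_mul_le_deriv (hf : Differentiable ℝ f) {k x y : ℝ} (hxy : x ≤ y)
    (hd : ∀ t ∈ Icc x y, k * f t ≤ deriv f t) : f x * exp (k * (y - x)) ≤ f y := by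
  have hg : ∀ t, HasDerivAt (fun t => f t * exp (-(k * t)))
      (deriv f t * exp (-(k * t)) + f t * (exp (-(k * t)) * -(k * 1))) t := fun t =>
    (hf t).hasDerivAt.mul ((hasDerivAt_id t).const_mul k).neg.exp
  have hmono : MonotoneOn (fun t => f t * exp (-(k * t))) (Icc x y) :=
    monotoneOn_of_deriv_nonneg (convex_Icc x y)
      (fun t _ => (hg t).continuousAt.continuousWithinAt)
      (fun t _ => (hg t).differentiableAt.differentiableWithinAt) fun t ht => by
        rw [(hg t).deriv]
        nlinarith [hd t (interior_subset ht), exp_pos (-(k * t))]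
  have := hmono (left_mem_Icc.2 hxy) (right_mem_Icc.2 hxy) hxy
  calc f x * exp (k * (y - x)) = f x * exp (-(k * x)) * exp (k * y) := by
        rw [mul_assoc, ← exp_add]; ring_nf
    _ ≤ f y * exp (-(k * y)) * exp (k * y) := by gcongr
    _ = f y := by rw [mul_assoc, ← exp_add, neg_add_cancel, exp_zero, mul_one]

end Comparison

theorem exists_last_eq_of_continuous {L : ℝ → ℝ} (hL : Continuous L) {a b ℓ : ℝ} (hab : a ≤ b)
    (ha : ℓ ≤ L a) (hb : L b < ℓ) : ∃ c ∈ Ico a b, L c = ℓ ∧ ∀ t ∈ Icc c b, L t ≤ ℓ := by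
  set S := Icc a b ∩ {t | ℓ ≤ L t}
  have hbdd : BddAbove S := ⟨b, fun t ht => ht.1.2⟩
  have hc : sSup S ∈ S := (isClosed_Icc.inter (isClosed_le continuous_const hL)).csSup_mem
    ⟨a, ⟨le_rfl, hab⟩, ha⟩ hbdd
  have hcb : sSup S < b := hc.1.2.lt_of_ne fun h => (h ▸ hc.2).not_gt hb
  have hafter : Ioc (sSup S) b ⊆ {t | L t ≤ ℓ} := fun t ht => show L t ≤ ℓ from
    le_of_not_ge fun h => (le_csSup hbdd ⟨⟨hc.1.1.trans ht.1.le, ht.2⟩, h⟩).not_gt ht.1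
  have hIcc : Icc (sSup S) b ⊆ {t | L t ≤ ℓ} := by
    rw [← closure_Ioc hcb.ne]
    exact closure_minimal hafter (isClosed_le hL continuous_const)
  exact ⟨sSup S, ⟨hc.1.1, hcb⟩, le_antisymm (hIcc ⟨le_rfl, hcb.le⟩) hc.2, hIcc⟩

section Recovery

variable {L : ℝ → ℝ} {Γ σ ℓ D : ℝ}

theorem exists_ge_of_growth_below (hL : Differentiable ℝ L) (hσ : 0 < σ) (hD : 0 ≤ D)
    (hpos : ∀ t ≥ 0, 0 < L t)
    (hgrow : ∀ t₀ ≥ 0, ∀ t₂, (∀ t ∈ Icc t₀ t₂, L t ≤ ℓ) →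
      ∀ t ∈ Icc (t₀ + D) t₂, σ * L t ≤ deriv L t) :
    ∃ w ≥ 0, ℓ ≤ L w := by
  by_contra! hlt
  have hLD := hpos D hD
  have hℓ : 0 < ℓ := (hpos 0 le_rfl).trans (hlt 0 le_rfl)
  set t := D + ℓ / (σ * L D)
  have hDt : D ≤ t := le_add_of_nonneg_right (by positivity)
  have hexp := mul_exp_le_of_mul_le_deriv hL hDt
    fun s hs => hgrow 0 le_rfl t (fun s hs => (hlt s hs.1).le) s (by simpa using hs)
  have hlin : L D * (1 + σ * (t - D)) ≤ L D * exp (σ * (t - D)) := by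
    gcongr; linarith [add_one_le_exp (σ * (t - D))]
  have : L D * (1 + σ * (t - D)) = L D + ℓ := by
    simp only [t, add_sub_cancel_left]; field_simp
  linarith [hlt t (hD.trans hDt)]

theorem ge_of_recovery (hL : Differentiable ℝ L) (hΓ : 0 ≤ Γ) (hσ : 0 ≤ σ) (hℓ : 0 ≤ ℓ)
    (hD : 0 ≤ D) (hpos : ∀ t ≥ 0, 0 < L t) (hdecay : ∀ t ≥ 0, -Γ * L t ≤ deriv L t)
    (hgrow : ∀ t₀ ≥ 0, ∀ t₂, (∀ t ∈ Icc t₀ t₂, L t ≤ ℓ) →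
      ∀ t ∈ Icc (t₀ + D) t₂, σ * L t ≤ deriv L t)
    {w : ℝ} (hw : 0 ≤ w) (hLw : ℓ ≤ L w) : ∀ t ≥ w, ℓ * exp (-Γ * D) ≤ L t := by
  intro t ht
  have hexpD : exp (-Γ * D) ≤ 1 := exp_le_one_iff.2 (by nlinarith)
  rcases le_or_gt ℓ (L t) with hℓt | hℓt
  · nlinarith
  obtain ⟨t₁, ht₁, hLt₁, hbelow⟩ := exists_last_eq_of_continuous hL.continuous ht hLw hℓt
  have ht₁0 : 0 ≤ t₁ := hw.trans ht₁.1
  have hdecay' : ∀ y, t₁ ≤ y → ℓ * exp (-Γ * (y - t₁)) ≤ L y := fun y hy =>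
    hLt₁ ▸ mul_exp_le_of_mul_le_deriv hL hy fun s hs => hdecay s (ht₁0.trans hs.1)
  rcases le_or_gt t (t₁ + D) with hshort | hlong
  · calc ℓ * exp (-Γ * D) ≤ ℓ * exp (-Γ * (t - t₁)) :=
          mul_le_mul_of_nonneg_left (exp_le_exp.2 (by nlinarith)) hℓ
      _ ≤ L t := hdecay' t ht₁.2.le
  · calc ℓ * exp (-Γ * D) = ℓ * exp (-Γ * (t₁ + D - t₁)) := by ring_nf
      _ ≤ L (t₁ + D) := hdecay' _ (by linarith)
      _ ≤ L (t₁ + D) * exp (σ * (t - (t₁ + D))) :=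
        le_mul_of_one_le_right (hpos _ (by linarith)).le (one_le_exp (by nlinarith))
      _ ≤ L t := mul_exp_le_of_mul_le_deriv hL hlong.le
          (hgrow t₁ ht₁0 t hbelow · ·)

theorem eventually_ge_of_recovery (hL : Differentiable ℝ L) (hΓ : 0 ≤ Γ) (hσ : 0 < σ)
    (hℓ : 0 ≤ ℓ) (hD : 0 ≤ D) (hpos : ∀ t ≥ 0, 0 < L t)
    (hdecay : ∀ t ≥ 0, -Γ * L t ≤ deriv L t)
    (hgrow : ∀ t₀ ≥ 0, ∀ t₂, (∀ t ∈ Icc t₀ t₂, L t ≤ ℓ) →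
      ∀ t ∈ Icc (t₀ + D) t₂, σ * L t ≤ deriv L t) :
    ∀ᶠ t in atTop, ℓ * exp (-Γ * D) ≤ L t := by
  obtain ⟨w, hw, hLw⟩ := exists_ge_of_growth_below hL hσ hD hpos hgrow
  exact eventually_atTop.2 ⟨w, ge_of_recovery hL hΓ hσ.le hℓ hD hpos hdecay hgrow hw hLw⟩

end Recovery

theorem le_liminf_of_eventually_le {f : ℝ → ℝ} {ε B : ℝ} (hB : ∀ᶠ t in atTop, f t ≤ B)
    (hε : ∀ᶠ t in atTop, ε ≤ f t) : ε ≤ liminf f atTop :=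
  le_liminf_of_le (isBoundedUnder_of_eventually_le hB).isCoboundedUnder_ge hε

theorem div_one_add_mul_le_div_one_add_mul {α x y : ℝ} (hα : 0 ≤ α) (hx : 0 ≤ x) (hxy : x ≤ y) :
    x / (1 + α * x) ≤ y / (1 + α * y) := by
  rw [div_le_div_iff₀ (by positivity) (by nlinarith)]
  nlinarith

section Logistic

variable {s d a Tmax T0 : ℝ}

theorem T0_pos_and_root (hs : 0 < s) (ha : 0 < a) (hTmax : 0 < Tmax)
    (hT0 : T0 = Tmax / (2 * a) * ((a - d) + √((a - d) ^ 2 + 4 * a * s / Tmax))) :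
    0 < T0 ∧ s - d * T0 + a * T0 * (1 - T0 / Tmax) = 0 := by
  set S := √((a - d) ^ 2 + 4 * a * s / Tmax)
  have hS : S ^ 2 = (a - d) ^ 2 + 4 * a * s / Tmax := Real.sq_sqrt (by positivity)
  have h4 : 0 < 4 * a * s / Tmax := by positivity
  have hpos : 0 < (a - d) + S := by nlinarith [Real.sqrt_nonneg ((a - d) ^ 2 + 4 * a * s / Tmax)]
  refine ⟨hT0 ▸ by positivity, ?_⟩
  rw [hT0]
  field_simp
  field_simp at hS
  linear_combination (-1) * hS

-- The logistic right-hand side is concave, equals `s` at `0` and vanishes at `T0`.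
theorem mul_one_sub_div_le_logistic {x : ℝ} (ha : 0 ≤ a) (hTmax : 0 < Tmax) (hT0 : 0 < T0)
    (hroot : s - d * T0 + a * T0 * (1 - T0 / Tmax) = 0) (hx : 0 ≤ x) (hxT0 : x ≤ T0) :
    s * (1 - x / T0) ≤ s - d * x + a * x * (1 - x / Tmax) := by
  have hchord : s - d * x + a * x * (1 - x / Tmax) - s * (1 - x / T0)
      = a / Tmax * x * (T0 - x) := by
    field_simp at hroot ⊢
    linear_combination x * hroot
  have : 0 ≤ a / Tmax * x * (T0 - x) := by
    have := sub_nonneg.2 hxT0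
    positivity
  linarith

theorem logistic_add_mul_le {δ x : ℝ} (hd : 0 ≤ d) (ha : 0 < a) (hTmax : 0 < Tmax) (hx : 0 ≤ x) :
    s - d * x + a * x * (1 - x / Tmax) + δ * x ≤ s + Tmax * (a + δ) ^ 2 / (4 * a) := by
  have hsq : s + Tmax * (a + δ) ^ 2 / (4 * a) - (s - d * x + a * x * (1 - x / Tmax) + δ * x)
      = d * x + (Tmax * (a + δ) - 2 * a * x) ^ 2 / (4 * a * Tmax) := by
    field_simp; ring
  have : 0 ≤ d * x + (Tmax * (a + δ) - 2 * a * x) ^ 2 / (4 * a * Tmax) := by positivity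
  linarith

end Logistic

section Reproduction

variable {s β α ρ δ q c k1 T0 η : ℝ}

theorem exists_weight (hq : 0 < q) (hc : 0 < c) (hk1 : 0 < k1) (hT0 : 0 < T0)
    (hR0 : (q * β - (δ + ρ) * k1) * T0 > c * (δ + ρ)) :
    ∃ η, δ + ρ < η * q ∧ η * (c + k1 * T0) < β * T0 := by
  have hden : 0 < c + k1 * T0 := by positivity
  obtain ⟨η, h₁, h₂⟩ := exists_between
    (show (δ + ρ) / q < β * T0 / (c + k1 * T0) by rw [div_lt_div_iff₀ hq hden]; linarith)
  exact ⟨η, (div_lt_iff₀ hq).1 h₁, by rw [lt_div_iff₀ hden] at h₂; linarith⟩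

theorem exists_threshold (hs : 0 < s) (hT0 : 0 < T0)
    (hη : η * (c + k1 * T0) < β * T0) :
    ∃ T₁ vb, 0 < T₁ ∧ T₁ < T0 ∧ 0 < vb ∧ η * (c + k1 * T₁) < β * T₁ / (1 + α * vb) ∧
      β * T₁ * vb < s * (1 - T₁ / T0) := by
  have hT₁ : ∀ᶠ x in 𝓝[<] T0, 0 < x ∧ η * (c + k1 * x) < β * x := by
    have hgap : Tendsto (fun x => β * x - η * (c + k1 * x)) (𝓝 T0)
        (𝓝 (β * T0 - η * (c + k1 * T0))) :=
      (by fun_prop : Continuous fun x => β * x - η * (c + k1 * x)).tendsto T0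
    filter_upwards [nhdsWithin_le_nhds (eventually_gt_nhds hT0),
      nhdsWithin_le_nhds (hgap.eventually_const_lt (sub_pos.2 hη))] with x hx hgx
    exact ⟨hx, sub_pos.1 hgx⟩
  obtain ⟨T₁, ⟨hT₁pos, hT₁gap⟩, hT₁T0⟩ := (hT₁.and self_mem_nhdsWithin).exists
  have hmargin : 0 < s * (1 - T₁ / T0) :=
    mul_pos hs (sub_pos.2 ((div_lt_one hT0).2 hT₁T0))
  have hvb : ∀ᶠ v in 𝓝[>] 0, η * (c + k1 * T₁) < β * T₁ / (1 + α * v) ∧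
      β * T₁ * v < s * (1 - T₁ / T0) := by
    have h₁ : Tendsto (fun v => β * T₁ / (1 + α * v)) (𝓝 0) (𝓝 (β * T₁ / (1 + α * 0))) :=
      tendsto_const_nhds.div (tendsto_const_nhds.add (tendsto_const_nhds.mul tendsto_id))
        (by simp)
    have h₂ : Tendsto (fun v => β * T₁ * v) (𝓝 0) (𝓝 (β * T₁ * 0)) :=
      tendsto_const_nhds.mul tendsto_id
    filter_upwards [nhdsWithin_le_nhds (h₁.eventually_const_lt (by simpa using hT₁gap)),
      nhdsWithin_le_nhds (h₂.eventually_lt_const (by simpa using hmargin))] with v hv₁ hv₂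
    exact ⟨hv₁, hv₂⟩
  obtain ⟨vb, ⟨hvb₁, hvb₂⟩, hvb⟩ := (hvb.and self_mem_nhdsWithin).exists
  exact ⟨T₁, vb, hT₁pos, hT₁T0, hvb, hvb₁, hvb₂⟩

-- The right-hand side is the derivative of `I + η V` along solutions of the model.
theorem exists_growth_rate {T₁ vb : ℝ} (hα : 0 < α) (hβ : 0 < β) (hc : 0 < c)
    (hη : 0 < η) (hT₁ : 0 < T₁) (hηI : δ + ρ < η * q)
    (hηV : η * (c + k1 * T₁) < β * T₁ / (1 + α * vb)) :
    ∃ σ > 0, ∀ T I V : ℝ, T₁ ≤ T → 0 ≤ I → 0 ≤ V → V ≤ vb →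
      σ * (I + η * V) ≤
        β * T * V / (1 + α * V) - (δ + ρ) * I + η * (q * I - c * V - k1 * V * T) := by
  set κ := β / (1 + α * vb) - η * k1
  have hκT₁ : η * c < κ * T₁ := by
    have : κ * T₁ = β * T₁ / (1 + α * vb) - η * k1 * T₁ := by simp only [κ]; ring
    linarith
  have hκ : 0 < κ := pos_of_mul_pos_left ((by positivity : 0 < η * c).trans hκT₁) hT₁.le
  refine ⟨min (η * q - (δ + ρ)) ((κ * T₁ - η * c) / η),
    lt_min (by linarith) (div_pos (by linarith) hη), fun T I V hT hI hV hVb => ?_⟩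
  have hvb : 0 ≤ vb := hV.trans hVb
  have hTpos : 0 < T := hT₁.trans_le hT
  have hinc : β * T * V / (1 + α * vb) ≤ β * T * V / (1 + α * V) :=
    div_le_div_of_nonneg_left (by positivity) (by positivity) (by nlinarith)
  have hIrate : min (η * q - (δ + ρ)) ((κ * T₁ - η * c) / η) * I ≤ (η * q - (δ + ρ)) * I :=
    mul_le_mul_of_nonneg_right (min_le_left _ _) hI
  have hVrate : min (η * q - (δ + ρ)) ((κ * T₁ - η * c) / η) * η ≤ κ * T - η * c := by
    calc _ ≤ (κ * T₁ - η * c) / η * η := mul_le_mul_of_nonneg_right (min_le_right _ _) hη.le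
      _ = κ * T₁ - η * c := div_mul_cancel₀ _ hη.ne'
      _ ≤ κ * T - η * c := by nlinarith
  have hsplit : β * T * V / (1 + α * vb) - (δ + ρ) * I + η * (q * I - c * V - k1 * V * T) =
      (η * q - (δ + ρ)) * I + (κ * T - η * c) * V := by
    simp only [κ]; ring
  nlinarith [mul_le_mul_of_nonneg_right hVrate hV]

end Reproduction

structure IsHIVSolution (s d a Tmax β α ρ δ q c k1 : ℝ) (T I V : ℝ → ℝ) : Prop where
  s_pos : 0 < s
  d_pos : 0 < d
  a_pos : 0 < a
  Tmax_pos : 0 < Tmax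
  β_pos : 0 < β
  α_pos : 0 < α
  ρ_pos : 0 < ρ
  δ_pos : 0 < δ
  q_pos : 0 < q
  c_pos : 0 < c
  k1_pos : 0 < k1
  differentiable_T : Differentiable ℝ T
  differentiable_I : Differentiable ℝ I
  differentiable_V : Differentiable ℝ V
  T_pos : ∀ t ≥ (0:ℝ), 0 < T t
  I_pos : ∀ t ≥ (0:ℝ), 0 < I t
  V_pos : ∀ t ≥ (0:ℝ), 0 < V t
  deriv_T : ∀ t ≥ (0:ℝ), deriv T t =
    s - d * T t + a * T t * (1 - T t / Tmax) - β * T t * V t / (1 + α * V t) + ρ * I t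
  deriv_I : ∀ t ≥ (0:ℝ), deriv I t = β * T t * V t / (1 + α * V t) - (δ + ρ) * I t
  deriv_V : ∀ t ≥ (0:ℝ), deriv V t = q * I t - c * V t - k1 * V t * T t

namespace IsHIVSolution

variable {s d a Tmax β α ρ δ q c k1 T0 : ℝ} {T I V : ℝ → ℝ}

theorem exists_add_le (h : IsHIVSolution s d a Tmax β α ρ δ q c k1 T I V) :
    ∃ B, ∀ t ≥ 0, T t + I t ≤ B := by
  have hδ := h.δ_pos
  set C := s + Tmax * (a + δ) ^ 2 / (4 * a)
  refine ⟨max (T 0 + I 0) (C / δ + 1), fun t ht => le_of_deriv_neg_at_level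
    (f := fun t => T t + I t) (h.differentiable_T.add h.differentiable_I) (le_max_left _ _)
    (fun u hu hu_eq => ?_) t ⟨ht, le_rfl⟩⟩
  have hu0 : 0 ≤ u := hu.1
  have hlevel : C / δ + 1 ≤ T u + I u := (le_max_right _ _).trans_eq hu_eq.symm
  have hC := logistic_add_mul_le (s := s) (δ := δ) h.d_pos.le h.a_pos h.Tmax_pos (h.T_pos u hu0).le
  have hδC : δ * (C / δ) = C := mul_div_cancel₀ _ hδ.ne'
  rw [deriv_fun_add (h.differentiable_T u) (h.differentiable_I u), h.deriv_T u hu0, h.deriv_I u hu0]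
  nlinarith

theorem exists_bound (h : IsHIVSolution s d a Tmax β α ρ δ q c k1 T I V) :
    ∃ B, ∀ t ≥ 0, T t ≤ B ∧ I t ≤ B ∧ V t ≤ B := by
  obtain ⟨B, hB⟩ := h.exists_add_le
  have hc := h.c_pos
  have hV : ∀ t ≥ 0, V t ≤ max (V 0) (q * B / c + 1) := fun t ht =>
    le_of_deriv_neg_at_level h.differentiable_V (le_max_left _ _) (fun u hu hu_eq => by
      have hu0 : 0 ≤ u := hu.1
      have hlevel : q * B / c + 1 ≤ V u := (le_max_right _ _).trans_eq hu_eq.symm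
      have hcB : c * (q * B / c) = q * B := mul_div_cancel₀ _ hc.ne'
      have hI : q * I u ≤ q * B := mul_le_mul_of_nonneg_left
        (by linarith [hB u hu0, h.T_pos u hu0]) h.q_pos.le
      have hVT : 0 < k1 * V u * T u := by
        have := h.k1_pos; have := h.V_pos u hu0; have := h.T_pos u hu0; positivity
      rw [h.deriv_V u hu0]
      nlinarith) t ⟨ht, le_rfl⟩
  refine ⟨max B (max (V 0) (q * B / c + 1)), fun t ht => ⟨?_, ?_, ?_⟩⟩
  · linarith [hB t ht, h.I_pos t ht, le_max_left B (max (V 0) (q * B / c + 1))]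
  · linarith [hB t ht, h.T_pos t ht, le_max_left B (max (V 0) (q * B / c + 1))]
  · exact (hV t ht).trans (le_max_right _ _)

theorem le_deriv_T (h : IsHIVSolution s d a Tmax β α ρ δ q c k1 T I V) (hT0 : 0 < T0)
    (hroot : s - d * T0 + a * T0 * (1 - T0 / Tmax) = 0) {T₁ vb t : ℝ} (ht : 0 ≤ t)
    (hT₁ : T₁ ≤ T0) (hT : T t ≤ T₁) (hV : V t ≤ vb) :
    s * (1 - T₁ / T0) - β * T₁ * vb ≤ deriv T t := by
  have hTt := h.T_pos t ht
  have hVt := h.V_pos t ht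
  have hT₁pos : 0 < T₁ := hTt.trans_le hT
  have := h.α_pos; have := h.β_pos
  have hchord := mul_one_sub_div_le_logistic h.a_pos.le h.Tmax_pos hT0 hroot hTt.le (hT.trans hT₁)
  have hsT : s * (1 - T₁ / T0) ≤ s * (1 - T t / T0) :=
    mul_le_mul_of_nonneg_left (by gcongr) h.s_pos.le
  have hinc : β * T t * V t / (1 + α * V t) ≤ β * T₁ * vb :=
    calc β * T t * V t / (1 + α * V t) ≤ β * T t * V t := div_le_self (by positivity)
          (by nlinarith)
      _ ≤ β * T₁ * vb := by gcongr
  have := h.ρ_pos; have := h.I_pos t ht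
  rw [h.deriv_T t ht]
  nlinarith

theorem eventually_T_ge (h : IsHIVSolution s d a Tmax β α ρ δ q c k1 T I V) (hT0 : 0 < T0)
    (hroot : s - d * T0 + a * T0 * (1 - T0 / Tmax) = 0) :
    ∃ ε > 0, ∀ᶠ t in atTop, ε ≤ T t := by
  obtain ⟨B, hB⟩ := h.exists_bound
  have hB0 : 0 < B := (h.V_pos 0 le_rfl).trans_le (hB 0 le_rfl).2.2
  have := h.s_pos; have := h.β_pos
  set ε := min (T0 / 2) (s / (4 * β * B))
  have hε : 0 < ε := lt_min (by positivity) (by positivity)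
  refine ⟨ε, hε, eventually_ge_of_deriv_ge_of_le h.differentiable_T (r := s / 4) (m := 0)
    (by positivity) ((eventually_ge_atTop 0).mono fun t ht => (h.T_pos t ht).le)
    ((eventually_ge_atTop 0).mono fun t ht hT => ?_)⟩
  have hclimb := h.le_deriv_T hT0 hroot ht ((min_le_left _ _).trans (by linarith)) hT (hB t ht).2.2
  have hhalf : s / 2 ≤ s * (1 - ε / T0) := by
    have : ε / T0 ≤ 1 / 2 := by
      rw [div_le_iff₀ hT0]; linarith [min_le_left (T0 / 2) (s / (4 * β * B))]
    nlinarith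
  have hsmall : β * ε * B ≤ s / 4 := by
    have := min_le_right (T0 / 2) (s / (4 * β * B))
    rw [le_div_iff₀ (by positivity)] at this
    linarith
  linarith

theorem deriv_I_add_mul_V (h : IsHIVSolution s d a Tmax β α ρ δ q c k1 T I V) (η : ℝ) :
    ∀ t ≥ 0, deriv (fun t => I t + η * V t) t =
      β * T t * V t / (1 + α * V t) - (δ + ρ) * I t + η * (q * I t - c * V t - k1 * V t * T t) :=
  fun t ht => by
    rw [deriv_fun_add (h.differentiable_I t) ((h.differentiable_V t).const_mul η),
      deriv_const_mul η (h.differentiable_V t), h.deriv_I t ht, h.deriv_V t ht]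

theorem neg_mul_le_deriv_I_add_mul_V (h : IsHIVSolution s d a Tmax β α ρ δ q c k1 T I V)
    {η B : ℝ} (hη : 0 ≤ η) (hB : ∀ t ≥ 0, T t ≤ B) :
    ∀ t ≥ 0, -max (δ + ρ) (c + k1 * B) * (I t + η * V t) ≤ deriv (fun t => I t + η * V t) t :=
  fun t ht => by
    have hIt := h.I_pos t ht; have hVt := h.V_pos t ht; have hTt := h.T_pos t ht
    have hF : 0 ≤ β * T t * V t / (1 + α * V t) := by
      have := h.α_pos; have := h.β_pos; positivity
    have hI : (δ + ρ) * I t ≤ max (δ + ρ) (c + k1 * B) * I t :=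
      mul_le_mul_of_nonneg_right (le_max_left _ _) hIt.le
    have hV : (c + k1 * T t) * V t ≤ max (δ + ρ) (c + k1 * B) * V t := by
      have : k1 * T t ≤ k1 * B := mul_le_mul_of_nonneg_left (hB t ht) h.k1_pos.le
      exact mul_le_mul_of_nonneg_right (by linarith [le_max_right (δ + ρ) (c + k1 * B)]) hVt.le
    have hqI : 0 ≤ η * (q * I t) := mul_nonneg hη (mul_nonneg h.q_pos.le hIt.le)
    rw [h.deriv_I_add_mul_V η t ht]
    nlinarith [mul_le_mul_of_nonneg_left hV hη]

theorem eventually_I_add_mul_V_ge (h : IsHIVSolution s d a Tmax β α ρ δ q c k1 T I V)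
    (hT0 : 0 < T0) (hroot : s - d * T0 + a * T0 * (1 - T0 / Tmax) = 0)
    (hR0 : (q * β - (δ + ρ) * k1) * T0 > c * (δ + ρ)) :
    ∃ η > 0, ∃ ℓ > 0, ∀ᶠ t in atTop, ℓ ≤ I t + η * V t := by
  have := h.δ_pos; have := h.ρ_pos
  obtain ⟨η, hηI, hηV⟩ := exists_weight h.q_pos h.c_pos h.k1_pos hT0 hR0
  have hη : 0 < η := pos_of_mul_pos_left ((by positivity : 0 < δ + ρ).trans hηI) h.q_pos.le
  obtain ⟨T₁, vb, hT₁, hT₁T0, hvb, hgap, hclimb⟩ := exists_threshold h.s_pos hT0 hηV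
  obtain ⟨σ, hσ, hrate⟩ := exists_growth_rate h.α_pos h.β_pos h.c_pos hη hT₁ hηI hgap
  obtain ⟨B, hB⟩ := h.exists_bound
  set r := s * (1 - T₁ / T0) - β * T₁ * vb
  have hr : 0 < r := sub_pos.2 hclimb
  -- While `I + η V ≤ η vb`, `V ≤ vb`, so `T` climbs at rate `r` and passes `T₁` within `T₁ / r`.
  have hgrow : ∀ t₀ ≥ 0, ∀ t₂, (∀ t ∈ Icc t₀ t₂, I t + η * V t ≤ η * vb) →
      ∀ t ∈ Icc (t₀ + T₁ / r) t₂, σ * (I t + η * V t) ≤ deriv (fun t => I t + η * V t) t := by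
    intro t₀ ht₀ t₂ hsmall
    have hV : ∀ t ∈ Icc t₀ t₂, V t ≤ vb := fun t ht => le_of_mul_le_mul_left
      (by linarith [hsmall t ht, h.I_pos t (ht₀.trans ht.1)]) hη
    have hT : ∀ t ∈ Icc (t₀ + T₁ / r) t₂, T₁ ≤ T t :=
      ge_of_deriv_ge_of_le h.differentiable_T hr (by positivity)
        (by rw [mul_div_cancel₀ _ hr.ne']; linarith [h.T_pos t₀ ht₀])
        fun t ht hTt => h.le_deriv_T hT0 hroot (ht₀.trans ht.1) hT₁T0.le hTt (hV t ht)
    intro t ht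
    have hD : t₀ ≤ t₀ + T₁ / r := le_add_of_nonneg_right (by positivity)
    have ht0 : 0 ≤ t := ht₀.trans (hD.trans ht.1)
    rw [h.deriv_I_add_mul_V η t ht0]
    exact hrate _ _ _ (hT t ht) (h.I_pos t ht0).le (h.V_pos t ht0).le
      (hV t ⟨hD.trans ht.1, ht.2⟩)
  have hpos : ∀ t ≥ 0, 0 < I t + η * V t := fun t ht => by
    have := h.I_pos t ht; have := h.V_pos t ht; positivity
  exact ⟨η, hη, _, by positivity, eventually_ge_of_recovery
    (h.differentiable_I.add (h.differentiable_V.const_mul η)) (by positivity) hσ (by positivity)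
    (by positivity) hpos (h.neg_mul_le_deriv_I_add_mul_V hη.le fun t ht => (hB t ht).1) hgrow⟩

theorem eventually_V_ge (h : IsHIVSolution s d a Tmax β α ρ δ q c k1 T I V) {η ℓ : ℝ}
    (hη : 0 ≤ η) (hℓ : 0 < ℓ) (hL : ∀ᶠ t in atTop, ℓ ≤ I t + η * V t) :
    ∃ ε > 0, ∀ᶠ t in atTop, ε ≤ V t := by
  obtain ⟨B, hB⟩ := h.exists_bound
  have hB0 : 0 < B := (h.T_pos 0 le_rfl).trans_le (hB 0 le_rfl).1
  have := h.q_pos; have := h.c_pos; have := h.k1_pos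
  set K := q * η + c + k1 * B
  have hK : 0 < K := by positivity
  refine ⟨q * ℓ / (2 * K), by positivity, eventually_ge_of_deriv_ge_of_le h.differentiable_V
    (r := q * ℓ / 2) (m := 0) (by positivity)
    ((eventually_ge_atTop 0).mono fun t ht => (h.V_pos t ht).le) ?_⟩
  filter_upwards [eventually_ge_atTop 0, hL] with t ht hLt hVt
  have hKV : K * V t ≤ q * ℓ / 2 := by
    rw [le_div_iff₀ (by positivity)] at hVt; linarith
  have hTB : k1 * V t * T t ≤ k1 * B * V t := by
    have := h.V_pos t ht
    rw [mul_right_comm]; gcongr; exact (hB t ht).1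
  rw [h.deriv_V t ht]
  nlinarith

theorem eventually_I_ge (h : IsHIVSolution s d a Tmax β α ρ δ q c k1 T I V) {εT εV : ℝ}
    (hεT : 0 < εT) (hεV : 0 < εV) (hT : ∀ᶠ t in atTop, εT ≤ T t)
    (hV : ∀ᶠ t in atTop, εV ≤ V t) :
    ∃ ε > 0, ∀ᶠ t in atTop, ε ≤ I t := by
  have := h.α_pos; have := h.β_pos; have := h.δ_pos; have := h.ρ_pos
  set R := β * εT * (εV / (1 + α * εV))
  have hR : 0 < R := by positivity
  refine ⟨R / (2 * (δ + ρ)), by positivity, eventually_ge_of_deriv_ge_of_le h.differentiable_I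
    (r := R / 2) (m := 0) (by positivity)
    ((eventually_ge_atTop 0).mono fun t ht => (h.I_pos t ht).le) ?_⟩
  filter_upwards [eventually_ge_atTop 0, hT, hV] with t ht hTt hVt hIt
  have hinc : R ≤ β * T t * V t / (1 + α * V t) := by
    rw [mul_div_assoc]
    exact mul_le_mul (by gcongr) (div_one_add_mul_le_div_one_add_mul h.α_pos.le hεV.le hVt)
      (by positivity) (by have := h.T_pos t ht; positivity)
  have hdecay : (δ + ρ) * I t ≤ R / 2 := by
    rw [le_div_iff₀ (by positivity)] at hIt; linarith
  rw [h.deriv_I t ht]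
  linarith

end IsHIVSolution

theorem stmt_11_general (s d a Tmax β α ρ δ q c k1 : ℝ)
    (hs : 0 < s) (hd : 0 < d) (ha : 0 < a) (hTmax : 0 < Tmax) (hβ : 0 < β)
    (hα : 0 < α) (hρ : 0 < ρ) (hδ : 0 < δ) (hq : 0 < q) (hc : 0 < c) (hk1 : 0 < k1)
    (T0 : ℝ)
    (hT0 : T0 = (Tmax/(2*a)) * ((a - d) + Real.sqrt ((a - d)^2 + 4*a*s/Tmax)))
    (hR0 : (q*β - (δ+ρ)*k1) * T0 > c*(δ+ρ))
    (T I V : ℝ → ℝ)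
    (hTdiff : Differentiable ℝ T) (hIdiff : Differentiable ℝ I)
    (hVdiff : Differentiable ℝ V)
    (hTpos : ∀ t ≥ (0:ℝ), 0 < T t) (hIpos : ∀ t ≥ (0:ℝ), 0 < I t)
    (hVpos : ∀ t ≥ (0:ℝ), 0 < V t)
    (hT : ∀ t ≥ (0:ℝ), deriv T t =
      s - d * T t + a * T t * (1 - T t / Tmax) - β * T t * V t / (1 + α * V t) + ρ * I t)
    (hI : ∀ t ≥ (0:ℝ), deriv I t =
      β * T t * V t / (1 + α * V t) - (δ + ρ) * I t)
    (hV : ∀ t ≥ (0:ℝ), deriv V t = q * I t - c * V t - k1 * V t * T t) :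
    ∃ ε : ℝ, 0 < ε ∧
      ε ≤ Filter.liminf T Filter.atTop ∧
      ε ≤ Filter.liminf I Filter.atTop ∧
      ε ≤ Filter.liminf V Filter.atTop := by
  have h : IsHIVSolution s d a Tmax β α ρ δ q c k1 T I V := ⟨hs, hd, ha, hTmax, hβ, hα, hρ, hδ,
    hq, hc, hk1, hTdiff, hIdiff, hVdiff, hTpos, hIpos, hVpos, hT, hI, hV⟩
  obtain ⟨hT0pos, hroot⟩ := T0_pos_and_root hs ha hTmax hT0
  obtain ⟨B, hB⟩ := h.exists_bound
  have hB' := eventually_ge_atTop (0 : ℝ) |>.mono hB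
  obtain ⟨εT, hεT, hTge⟩ := h.eventually_T_ge hT0pos hroot
  obtain ⟨η, hη, ℓ, hℓ, hL⟩ := h.eventually_I_add_mul_V_ge hT0pos hroot hR0
  obtain ⟨εV, hεV, hVge⟩ := h.eventually_V_ge hη.le hℓ hL
  obtain ⟨εI, hεI, hIge⟩ := h.eventually_I_ge hεT hεV hTge hVge
  refine ⟨min εT (min εI εV), by positivity, ?_, ?_, ?_⟩
  · exact le_liminf_of_eventually_le (hB'.mono fun _ h => h.1)
      (hTge.mono fun _ h => (min_le_left _ _).trans h)
  · exact le_liminf_of_eventually_le (hB'.mono fun _ h => h.2.1)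
      (hIge.mono fun _ h => (min_le_of_right_le (min_le_left _ _)).trans h)
  · exact le_liminf_of_eventually_le (hB'.mono fun _ h => h.2.2)
      (hVge.mono fun _ h => (min_le_of_right_le (min_le_right _ _)).trans h)

theorem stmt_11 (s d a Tmax β α ρ δ q c k1 : ℝ)
    (hs : 0 < s) (hd : 0 < d) (ha : 0 < a) (hTmax : 0 < Tmax) (hβ : 0 < β)
    (hα : 0 < α) (hρ : 0 < ρ) (hδ : 0 < δ) (hq : 0 < q) (hc : 0 < c) (hk1 : 0 < k1)
    (hqβ : q*β > (δ+ρ)*k1)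
    (T0 : ℝ)
    (hT0 : T0 = (Tmax/(2*a)) * ((a - d) + Real.sqrt ((a - d)^2 + 4*a*s/Tmax)))
    (hR0 : (q*β - (δ+ρ)*k1) * T0 > c*(δ+ρ))
    (T I V : ℝ → ℝ)
    (hTdiff : Differentiable ℝ T) (hIdiff : Differentiable ℝ I)
    (hVdiff : Differentiable ℝ V)
    (hTpos : ∀ t ≥ (0:ℝ), 0 < T t) (hIpos : ∀ t ≥ (0:ℝ), 0 < I t)
    (hVpos : ∀ t ≥ (0:ℝ), 0 < V t)
    (hT : ∀ t ≥ (0:ℝ), deriv T t =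
      s - d * T t + a * T t * (1 - T t / Tmax) - β * T t * V t / (1 + α * V t) + ρ * I t)
    (hI : ∀ t ≥ (0:ℝ), deriv I t =
      β * T t * V t / (1 + α * V t) - (δ + ρ) * I t)
    (hV : ∀ t ≥ (0:ℝ), deriv V t = q * I t - c * V t - k1 * V t * T t) :
    ∃ ε : ℝ, 0 < ε ∧
      ε ≤ Filter.liminf T Filter.atTop ∧
      ε ≤ Filter.liminf I Filter.atTop ∧
      ε ≤ Filter.liminf V Filter.atTop :=
  stmt_11_general s d a Tmax β α ρ δ q c k1 hs hd ha hTmax hβ hα hρ hδ hq hc hk1 T0 hT0 hR0 T I V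
    hTdiff hIdiff hVdiff hTpos hIpos hVpos hT hI hV
end

section
/- Let p, r, A, τ be real numbers with p > 0, r > 0, A > p·r, and τ ≥ 0. Then there exists a real number λ > 0 such that λ² + (p + r)·λ + p·r − A·exp(−λ·τ) = 0. -/
/-!
The characteristic function is `p * r - A < 0` at `λ = 0`, while for `λ ≥ 0` and `τ ≥ 0` the
delay term `A * exp (-λ * τ)` is bounded by `|A|`, so the quadratic part drives it to `+∞`.
The intermediate value theorem gives a positive root.
-/

open Filter Real

theorem exists_pos_eq_zero_of_neg_of_tendsto_atTop {f : ℝ → ℝ} (hf : ContinuousOn f (Set.Ici 0))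
    (h0 : f 0 < 0) (htop : Tendsto f atTop atTop) : ∃ x, 0 < x ∧ f x = 0 := by
  obtain ⟨b, hfb, hb⟩ := ((htop.eventually_gt_atTop 0).and (eventually_ge_atTop 0)).exists
  obtain ⟨x, hx, hfx⟩ :=
    intermediate_value_Ioo hb (hf.mono Set.Icc_subset_Ici_self) (Set.mem_Ioo.2 ⟨h0, hfb⟩)
  exact ⟨x, hx.1, hfx⟩

theorem tendsto_quadratic_sub_mul_exp_atTop (b c A : ℝ) {τ : ℝ} (hτ : 0 ≤ τ) :
    Tendsto (fun x : ℝ => x ^ 2 + b * x + c - A * exp (-x * τ)) atTop atTop := by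
  have hquad : Tendsto (fun x : ℝ => x * (x + b) + (c - |A|)) atTop atTop :=
    tendsto_atTop_add_const_right _ _
      (tendsto_id.atTop_mul_atTop₀ (tendsto_atTop_add_const_right _ b tendsto_id))
  refine tendsto_atTop_mono' atTop ?_ hquad
  filter_upwards [eventually_ge_atTop 0] with x hx
  have hexp : exp (-x * τ) ≤ 1 := exp_le_one_iff.2 (by nlinarith)
  have hbound : A * exp (-x * τ) ≤ |A| :=
    calc A * exp (-x * τ) ≤ |A| * exp (-x * τ) := by gcongr; exact le_abs_self A
      _ ≤ |A| := mul_le_of_le_one_right (abs_nonneg A) hexp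
  nlinarith

theorem stmt_12_general (p r A τ : ℝ) (hA : A > p*r)
    (hτ : 0 ≤ τ) :
    ∃ lam : ℝ, 0 < lam ∧
      lam^2 + (p + r)*lam + p*r - A*Real.exp (-lam*τ) = 0 := by
  refine exists_pos_eq_zero_of_neg_of_tendsto_atTop ?_ ?_
    (tendsto_quadratic_sub_mul_exp_atTop (p + r) (p * r) A hτ)
  · fun_prop
  · norm_num
    linarith

theorem stmt_12 (p r A τ : ℝ) (hp : 0 < p) (hr : 0 < r) (hA : A > p*r)
    (hτ : 0 ≤ τ) :
    ∃ lam : ℝ, 0 < lam ∧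
      lam^2 + (p + r)*lam + p*r - A*Real.exp (-lam*τ) = 0 :=
  stmt_12_general p r A τ hA hτ
end

section
/- Let p, r, A, τ be real numbers with p > 0, r > 0, 0 < A < p·r, and τ ≥ 0. Then every complex number λ satisfying λ² + (p + r)·λ + p·r − A·exp(−λ·τ) = 0 has Re λ < 0. -/
/-!
Factor the characteristic function as `(λ + p)(λ + r) - A e^{-λτ}`. In the closed right
half-plane `|λ + p| ≥ p`, `|λ + r| ≥ r` and `|e^{-λτ}| ≤ 1`, so a root there would force
`p r ≤ |(λ + p)(λ + r)| = A |e^{-λτ}| ≤ A`.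
-/

namespace Complex

lemma le_norm_add_ofReal {z : ℂ} (hz : 0 ≤ z.re) (a : ℝ) : a ≤ ‖z + a‖ :=
  calc a ≤ (z + a).re := by simpa using hz
    _ ≤ ‖z + a‖ := re_le_norm _

lemma norm_exp_neg_mul_ofReal_le_one {z : ℂ} (hz : 0 ≤ z.re) {τ : ℝ} (hτ : 0 ≤ τ) :
    ‖exp (-z * τ)‖ ≤ 1 := by
  rw [norm_exp, Real.exp_le_one_iff]
  simpa using mul_nonneg hz hτ

theorem re_neg_of_mul_add_eq_mul_exp {p r A τ : ℝ} (hr : 0 ≤ r) (hA : 0 ≤ A)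
    (hApr : A < p * r) (hτ : 0 ≤ τ) {z : ℂ} (hz : (z + p) * (z + r) = A * exp (-z * τ)) :
    z.re < 0 := by
  by_contra! hre
  have hprod : p * r ≤ ‖(z + p) * (z + r)‖ := by
    rw [norm_mul]
    exact mul_le_mul (le_norm_add_ofReal hre p) (le_norm_add_ofReal hre r) hr (norm_nonneg _)
  have hexp : ‖(A : ℂ) * exp (-z * τ)‖ ≤ A := by
    rw [norm_mul, norm_real, Real.norm_of_nonneg hA]
    exact mul_le_of_le_one_right hA (norm_exp_neg_mul_ofReal_le_one hre hτ)
  rw [hz] at hprod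
  linarith

end Complex

theorem stmt_13_general (p r A τ : ℝ) (hr : 0 < r) (hA : 0 < A)
    (hApr : A < p*r) (hτ : 0 ≤ τ) :
    ∀ lam : ℂ,
      lam^2 + ((p + r : ℝ) : ℂ)*lam + ((p*r : ℝ) : ℂ)
        - (A : ℂ)*Complex.exp (-lam*(τ : ℂ)) = 0 →
      lam.re < 0 := by
  intro lam hlam
  refine Complex.re_neg_of_mul_add_eq_mul_exp hr.le hA.le hApr hτ ?_
  push_cast at hlam
  linear_combination hlam

theorem stmt_13 (p r A τ : ℝ) (hp : 0 < p) (hr : 0 < r) (hA : 0 < A)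
    (hApr : A < p*r) (hτ : 0 ≤ τ) :
    ∀ lam : ℂ,
      lam^2 + ((p + r : ℝ) : ℂ)*lam + ((p*r : ℝ) : ℂ)
        - (A : ℂ)*Complex.exp (-lam*(τ : ℂ)) = 0 →
      lam.re < 0 :=
  stmt_13_general p r A τ hr hA hApr hτ
end

section
/- Let a1, a2, a3, a4, a5 be real numbers and set m1 = a1² − 2·a2, m2 = a2² − 2·a1·a5 − a4², m3 = a5² − a3². Let ω be a real number with ω > 0 such that ω⁶ + m1·ω⁴ + m2·ω² + m3 = 0 and a3² + a4²·ω² > 0. Then there exists a real number τ ≥ 0 such that (iω)³ + a1·(iω)² + a2·(iω) + a5 + exp(−iω·τ)·(a3 + a4·iω) = 0, where i is the imaginary unit. -/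
/-! The sextic is exactly `|P(iω)|² - |Q(iω)|²` for `P(λ) = λ³ + a1 λ² + a2 λ + a5` and
`Q(λ) = a3 + a4 λ`, so `-P(iω) / Q(iω)` lies on the unit circle (or `P(iω) = Q(iω) = 0`), and
`τ ↦ exp (-iωτ)` already covers the whole circle for `τ ∈ [0, 2π/ω]`. -/

open Complex

namespace Complex

theorem exists_nonneg_exp_neg_I_mul_eq {ω : ℝ} (hω : 0 < ω) {z : ℂ} (hz : ‖z‖ = 1) :
    ∃ τ : ℝ, 0 ≤ τ ∧ exp (-(I * ω) * τ) = z := by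
  -- `arg z ≤ π < 2π` keeps `τ` nonnegative; the extra full turn is invisible to `exp`.
  refine ⟨(2 * Real.pi - arg z) / ω, div_nonneg ?_ hω.le, ?_⟩
  · linarith [arg_le_pi z, Real.pi_pos]
  · have hexponent : -(I * ω) * (((2 * Real.pi - arg z) / ω : ℝ) : ℂ)
        = arg z * I - 2 * Real.pi * I := by
      have : (ω : ℂ) ≠ 0 := by exact_mod_cast hω.ne'
      push_cast
      field_simp
      ring
    rw [hexponent, exp_sub, exp_two_pi_mul_I, div_one]
    simpa [hz] using norm_mul_exp_arg_mul_I z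

theorem exists_nonneg_add_exp_neg_I_mul_mul_eq_zero {ω : ℝ} (hω : 0 < ω) {P Q : ℂ}
    (hPQ : ‖P‖ = ‖Q‖) : ∃ τ : ℝ, 0 ≤ τ ∧ P + exp (-(I * ω) * τ) * Q = 0 := by
  rcases eq_or_ne Q 0 with rfl | hQ
  · exact ⟨0, le_rfl, by simpa using hPQ⟩
  · have hz : ‖-P / Q‖ = 1 := by
      rw [norm_div, norm_neg, hPQ, div_self (norm_ne_zero_iff.mpr hQ)]
    obtain ⟨τ, hτ, hexp⟩ := exists_nonneg_exp_neg_I_mul_eq hω hz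
    refine ⟨τ, hτ, ?_⟩
    rw [hexp, div_mul_cancel₀ _ hQ, add_neg_cancel]

end Complex

theorem normSq_cubic_I_mul_sub_normSq_linear_I_mul (a1 a2 a3 a4 a5 ω : ℝ) :
    normSq ((I * ω) ^ 3 + a1 * (I * ω) ^ 2 + a2 * (I * ω) + a5)
        - normSq (a3 + a4 * (I * ω))
      = ω ^ 6 + (a1 ^ 2 - 2 * a2) * ω ^ 4 + (a2 ^ 2 - 2 * a1 * a5 - a4 ^ 2) * ω ^ 2
        + (a5 ^ 2 - a3 ^ 2) := by
  simp only [pow_succ, pow_zero, one_mul, normSq_apply, add_re, mul_re, I_re, ofReal_re, zero_mul,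
    I_im, ofReal_im, mul_zero, sub_self, mul_im, zero_add, zero_sub, add_zero, mul_neg, sub_zero,
    add_im, neg_mul, neg_zero]
  ring

theorem stmt_17_general (a1 a2 a3 a4 a5 : ℝ)
    (m1 m2 m3 : ℝ)
    (hm1 : m1 = a1^2 - 2*a2) (hm2 : m2 = a2^2 - 2*a1*a5 - a4^2)
    (hm3 : m3 = a5^2 - a3^2)
    (ω : ℝ) (hω : 0 < ω)
    (hsextic : ω^6 + m1*ω^4 + m2*ω^2 + m3 = 0) :
    ∃ τ : ℝ, 0 ≤ τ ∧
      (Complex.I*(ω : ℂ))^3 + (a1 : ℂ)*(Complex.I*(ω : ℂ))^2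
        + (a2 : ℂ)*(Complex.I*(ω : ℂ)) + (a5 : ℂ)
        + Complex.exp (-(Complex.I*(ω : ℂ))*(τ : ℂ))
          * ((a3 : ℂ) + (a4 : ℂ)*(Complex.I*(ω : ℂ))) = 0 := by
  apply exists_nonneg_add_exp_neg_I_mul_mul_eq_zero hω
  have hnormSq := normSq_cubic_I_mul_sub_normSq_linear_I_mul a1 a2 a3 a4 a5 ω
  rw [← hm1, ← hm2, ← hm3, hsextic, sub_eq_zero, normSq_eq_norm_sq, normSq_eq_norm_sq] at hnormSq
  exact (sq_eq_sq₀ (norm_nonneg _) (norm_nonneg _)).mp hnormSq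

theorem stmt_17 (a1 a2 a3 a4 a5 : ℝ)
    (m1 m2 m3 : ℝ)
    (hm1 : m1 = a1^2 - 2*a2) (hm2 : m2 = a2^2 - 2*a1*a5 - a4^2)
    (hm3 : m3 = a5^2 - a3^2)
    (ω : ℝ) (hω : 0 < ω)
    (hsextic : ω^6 + m1*ω^4 + m2*ω^2 + m3 = 0)
    (hdenom : 0 < a3^2 + a4^2*ω^2) :
    ∃ τ : ℝ, 0 ≤ τ ∧
      (Complex.I*(ω : ℂ))^3 + (a1 : ℂ)*(Complex.I*(ω : ℂ))^2
        + (a2 : ℂ)*(Complex.I*(ω : ℂ)) + (a5 : ℂ)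
        + Complex.exp (-(Complex.I*(ω : ℂ))*(τ : ℂ))
          * ((a3 : ℂ) + (a4 : ℂ)*(Complex.I*(ω : ℂ))) = 0 :=
  stmt_17_general a1 a2 a3 a4 a5 m1 m2 m3 hm1 hm2 hm3 ω hω hsextic
end

section
/- Let a1, a2, a3, a4, a5 be real numbers and let ω > 0 be a real number. Set D = (a2·ω − ω³)² + (a5 − a1·ω²)², and assume D = a3² + a4²·ω², D ≠ 0, and ω⁶ + (a1² − 2a2)·ω⁴ + (a2² − 2a1·a5 − a4²)·ω² + (a5² − a3²) = 0. Let z = iω ∈ ℂ. Then Re( (2z³ + a1·z² − a5) / (−z²·(z³ + a1·z² + a2·z + a5)) ) + Re( −a3 / (z²·(a3 + a4·z)) ) = (3ω⁴ + 2(a1² − 2a2)·ω² + (a2² − 2a1·a5 − a4²)) / D. -/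
/-!
At `z = iω` both quotients become quotients of complex numbers with explicit real and imaginary
parts, and `z² = -ω²` factors out of both denominators. The first term has real part
`(2ω⁶ + m₁ω⁴ - a₅²) / (ω² D)` and the second `a₃² / (ω² D)`, where the two expressions for `D`
are the squared moduli of `(iω)³ + a₁(iω)² + a₂(iω) + a₅` and of `a₃ + a₄ iω`. The sextic
`h(ω²) = 0` turns `a₃² - a₅²` into `ω⁶ + m₁ω⁴ + m₂ω²`, so the numerator of the sum is
`ω² h'(ω²)`, and `ω²` cancels.
-/

open Complex

theorem Complex.re_div_add_mul_I (x y u v : ℝ) :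
    ((x + y * I) / (u + v * I)).re = (x * u + y * v) / (u ^ 2 + v ^ 2) := by
  rw [div_re, normSq_add_mul_I, ← add_div]
  simp

theorem re_div_neg_sq_mul_cubic_I_mul (a1 a2 a5 ω : ℝ) :
    ((2 * (I * ω) ^ 3 + a1 * (I * ω) ^ 2 - a5) /
        (-((I * ω) ^ 2) * ((I * ω) ^ 3 + a1 * (I * ω) ^ 2 + a2 * (I * ω) + a5))).re
      = (2 * ω ^ 6 + (a1 ^ 2 - 2 * a2) * ω ^ 4 - a5 ^ 2) /
          (ω ^ 2 * ((a2 * ω - ω ^ 3) ^ 2 + (a5 - a1 * ω ^ 2) ^ 2)) := by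
  have hnum : 2 * (I * ω) ^ 3 + a1 * (I * ω) ^ 2 - a5
      = ((-(a1 * ω ^ 2) - a5 : ℝ) : ℂ) + ((-(2 * ω ^ 3) : ℝ) : ℂ) * I := by
    simp only [mul_pow, I_sq, I_pow_three]; push_cast; ring
  have hden : -((I * ω) ^ 2) * ((I * ω) ^ 3 + a1 * (I * ω) ^ 2 + a2 * (I * ω) + a5)
      = ((ω ^ 2 * (a5 - a1 * ω ^ 2) : ℝ) : ℂ) + ((ω ^ 2 * (a2 * ω - ω ^ 3) : ℝ) : ℂ) * I := by
    simp only [mul_pow, I_sq, I_pow_three]; push_cast; ring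
  rw [hnum, hden, re_div_add_mul_I]
  field_simp
  ring

theorem re_div_sq_mul_linear_I_mul (a3 a4 ω : ℝ) :
    ((-(a3 : ℂ)) / ((I * ω) ^ 2 * (a3 + a4 * (I * ω)))).re
      = a3 ^ 2 / (ω ^ 2 * (a3 ^ 2 + a4 ^ 2 * ω ^ 2)) := by
  have hnum : -(a3 : ℂ) = ((-a3 : ℝ) : ℂ) + ((0 : ℝ) : ℂ) * I := by push_cast; ring
  have hden : (I * ω) ^ 2 * (a3 + a4 * (I * ω))
      = ((-(ω ^ 2 * a3) : ℝ) : ℂ) + ((-(ω ^ 2 * (a4 * ω)) : ℝ) : ℂ) * I := by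
    simp only [mul_pow, I_sq]; push_cast; ring
  rw [hnum, hden, re_div_add_mul_I]
  field_simp
  ring

theorem stmt_18_general (a1 a2 a3 a4 a5 ω : ℝ) (hω : 0 < ω)
    (D : ℝ) (hD : D = (a2*ω - ω^3)^2 + (a5 - a1*ω^2)^2)
    (hDeq : D = a3^2 + a4^2*ω^2)
    (hsextic : ω^6 + (a1^2 - 2*a2)*ω^4 + (a2^2 - 2*a1*a5 - a4^2)*ω^2
      + (a5^2 - a3^2) = 0)
    (z : ℂ) (hz : z = Complex.I*(ω : ℂ)) :
    ((2*z^3 + (a1 : ℂ)*z^2 - (a5 : ℂ)) /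
        (-(z^2)*(z^3 + (a1 : ℂ)*z^2 + (a2 : ℂ)*z + (a5 : ℂ)))).re
      + ((-(a3 : ℂ)) / (z^2*((a3 : ℂ) + (a4 : ℂ)*z))).re
      = (3*ω^4 + 2*(a1^2 - 2*a2)*ω^2 + (a2^2 - 2*a1*a5 - a4^2)) / D := by
  subst hz
  rw [re_div_neg_sq_mul_cubic_I_mul, re_div_sq_mul_linear_I_mul, ← hD, ← hDeq, ← add_div]
  have hnum : 2*ω^6 + (a1^2 - 2*a2)*ω^4 - a5^2 + a3^2
      = ω^2 * (3*ω^4 + 2*(a1^2 - 2*a2)*ω^2 + (a2^2 - 2*a1*a5 - a4^2)) := by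
    linear_combination -hsextic
  rw [hnum, mul_div_mul_left _ _ (pow_ne_zero 2 hω.ne')]

theorem stmt_18 (a1 a2 a3 a4 a5 ω : ℝ) (hω : 0 < ω)
    (D : ℝ) (hD : D = (a2*ω - ω^3)^2 + (a5 - a1*ω^2)^2)
    (hDeq : D = a3^2 + a4^2*ω^2) (hDne : D ≠ 0)
    (hsextic : ω^6 + (a1^2 - 2*a2)*ω^4 + (a2^2 - 2*a1*a5 - a4^2)*ω^2
      + (a5^2 - a3^2) = 0)
    (z : ℂ) (hz : z = Complex.I*(ω : ℂ)) :
    ((2*z^3 + (a1 : ℂ)*z^2 - (a5 : ℂ)) /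
        (-(z^2)*(z^3 + (a1 : ℂ)*z^2 + (a2 : ℂ)*z + (a5 : ℂ)))).re
      + ((-(a3 : ℂ)) / (z^2*((a3 : ℂ) + (a4 : ℂ)*z))).re
      = (3*ω^4 + 2*(a1^2 - 2*a2)*ω^2 + (a2^2 - 2*a1*a5 - a4^2)) / D :=
  stmt_18_general a1 a2 a3 a4 a5 ω hω D hD hDeq hsextic z hz
end
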